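/- Let φ = ⋁_{i=1}^ℓ ⋀_{j=1}^3 l_{i,j} be a propositional 3-DNF formula over variables v_1, …, v_n. Define the ABox A_φ = {False(a), Bool(a)} ∪ {Var(v_k) | 1 ≤ k ≤ n} ∪ {clause(a, c_i) | 1 ≤ i ≤ ℓ} ∪ {pos_j(c_i, v_k) | l_{i,j} = v_k} ∪ {neg_j(c_i, v_k) | l_{i,j} = ¬v_k}, and the EL TBox T consisting of: Bool ⊑ True; Var ⊑ ∃val.Bool; ∃val.True ⊑ True; ∃val.False ⊑ False; ∃clause.True ⊑ True; and for every choice (X_1, X_2, X_3) with X_j ∈ {pos_j.True, neg_j.False}, the axiom ∃X_1 ⊓ ∃X_2 ⊓ ∃X_3 ⊑ True. Let ω assign weight ∞ to every axiom and assertion except Bool ⊑ True, which gets weight 1. Then φ is a tautology if and only if (T, A_φ)_ω ⊨_c^1 True(a). -/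

import Mathlib

namespace DL

/-! ### Syntax -/

abbrev IndName := ℕ
abbrev CName := ℕ
abbrev RName := ℕ

/-- Roles: role names and inverse roles. -/
inductive Role where
  | name : RName → Role
  | inv  : RName → Role
deriving DecidableEq

/-- `ALCHIO` concepts. -/
inductive Concept where
  | top  : Concept
  | bot  : Concept
  | atom : CName → Concept
  | nom  : IndName → Concept
  | neg  : Concept → Concept
  | conj : Concept → Concept → Concept
  | ex   : Role → Concept → Concept
deriving DecidableEq

/-- TBox axioms: concept inclusions and role inclusions. -/
inductive Axiom where
  | ci : Concept → Concept → Axiom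
  | ri : Role → Role → Axiom
deriving DecidableEq

/-- ABox assertions. -/
inductive Assertion where
  | ca : CName → IndName → Assertion
  | ra : RName → IndName → IndName → Assertion
deriving DecidableEq

/-! ### Interpretations -/

/-- A DL interpretation with domain a subset of a universe `U`.  Individual names are
interpreted via `indI` (under the standard names assumption, the individual names of the
ABox under consideration are interpreted "as themselves", i.e. injectively). -/
structure Interp (U : Type) where
  dom : Set U
  indI : IndName → U
  cI : CName → Set U
  rI : RName → Set (U × U)
  cI_sub : ∀ A, cI A ⊆ dom
  rI_sub : ∀ r p, p ∈ rI r → p.1 ∈ dom ∧ p.2 ∈ dom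

variable {U : Type}

/-- Every individual name denotes an element of the domain. -/
def Interp.Proper (I : Interp U) : Prop := ∀ a, I.indI a ∈ I.dom

def Role.interp (I : Interp U) : Role → Set (U × U)
  | Role.name r => I.rI r
  | Role.inv r  => {p | (p.2, p.1) ∈ I.rI r}

def Concept.interp (I : Interp U) : Concept → Set U
  | Concept.top => I.dom
  | Concept.bot => ∅
  | Concept.atom A => I.cI A
  | Concept.nom a => {I.indI a} ∩ I.dom
  | Concept.neg C => I.dom \ Concept.interp I C
  | Concept.conj C D => Concept.interp I C ∩ Concept.interp I D
  | Concept.ex r C => {d | ∃ e, (d, e) ∈ Role.interp I r ∧ e ∈ Concept.interp I C}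

def Assertion.sat (I : Interp U) : Assertion → Prop
  | Assertion.ca A a => I.indI a ∈ I.cI A
  | Assertion.ra r a b => (I.indI a, I.indI b) ∈ I.rI r

/-! ### Violations and cost -/

/-- Violations of a concept inclusion `C ⊑ D`. -/
def vioCI (I : Interp U) (C D : Concept) : Set U :=
  Concept.interp I C \ Concept.interp I D

/-- Violations of a role inclusion `r ⊑ s`. -/
def vioRI (I : Interp U) (r s : Role) : Set (U × U) :=
  Role.interp I r \ Role.interp I s

/-- The number of violations of an axiom. -/
noncomputable def Axiom.vioCount (I : Interp U) : Axiom → ℕ∞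
  | Axiom.ci C D => (vioCI I C D).encard
  | Axiom.ri r s => (vioRI I r s).encard

open Classical in
/-- The cost of an interpretation w.r.t. a weighted knowledge base `(T, A)` with weight
functions `wT` (on TBox axioms) and `wA` (on ABox assertions). -/
noncomputable def cost (T : Finset Axiom) (A : Finset Assertion)
    (wT : Axiom → ℕ∞) (wA : Assertion → ℕ∞) (I : Interp U) : ℕ∞ :=
  (∑ τ ∈ T, wT τ * Axiom.vioCount I τ) +
    ∑ α ∈ A, (if Assertion.sat I α then 0 else wA α)

/-! ### Queries -/

inductive Term where
  | var : ℕ → Term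
  | ind : IndName → Term
deriving DecidableEq

inductive QAtom where
  | ca : CName → Term → QAtom
  | ra : RName → Term → Term → QAtom
deriving DecidableEq

/-- A Boolean conjunctive query: a finite set of atoms, all of whose variables are
(implicitly) existentially quantified. -/
abbrev BCQ := Finset QAtom

def Term.eval (I : Interp U) (π : ℕ → U) : Term → U
  | Term.var v => π v
  | Term.ind a => I.indI a

def QAtom.sat (I : Interp U) (π : ℕ → U) : QAtom → Prop
  | QAtom.ca A t => Term.eval I π t ∈ I.cI A
  | QAtom.ra r t t' => (Term.eval I π t, Term.eval I π t') ∈ I.rI r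

/-- Satisfaction of a BCQ in an interpretation. -/
def satQ (I : Interp U) (q : BCQ) : Prop :=
  ∃ π : ℕ → U, (∀ v, π v ∈ I.dom) ∧ ∀ a ∈ q, QAtom.sat I π a

/-- An instance query is a BCQ with a single atom. -/
def IsIQ (q : BCQ) : Prop := ∃ a : QAtom, q = {a}

/-! ### Cost-based semantics -/

/-- `k`-satisfiability: some interpretation has cost at most `k`. -/
def ksat (T : Finset Axiom) (A : Finset Assertion)
    (wT : Axiom → ℕ∞) (wA : Assertion → ℕ∞) (k : ℕ) : Prop :=
  ∃ (U : Type) (I : Interp U), I.Proper ∧ cost T A wT wA I ≤ (k : ℕ∞)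

/-- `K ⊨ₚᵏ q`: some interpretation of cost at most `k` satisfies `q`. -/
def satP (T : Finset Axiom) (A : Finset Assertion)
    (wT : Axiom → ℕ∞) (wA : Assertion → ℕ∞) (k : ℕ) (q : BCQ) : Prop :=
  ∃ (U : Type) (I : Interp U), I.Proper ∧ cost T A wT wA I ≤ (k : ℕ∞) ∧ satQ I q

/-- `K ⊨꜀ᵏ q`: every interpretation of cost at most `k` satisfies `q`. -/
def satC (T : Finset Axiom) (A : Finset Assertion)
    (wT : Axiom → ℕ∞) (wA : Assertion → ℕ∞) (k : ℕ) (q : BCQ) : Prop :=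
  ∀ (U : Type) (I : Interp U), I.Proper → cost T A wT wA I ≤ (k : ℕ∞) → satQ I q

/-- The optimal cost of a weighted knowledge base. -/
noncomputable def optCost (T : Finset Axiom) (A : Finset Assertion)
    (wT : Axiom → ℕ∞) (wA : Assertion → ℕ∞) : ℕ∞ :=
  sInf {c : ℕ∞ | ∃ (U : Type) (I : Interp U), I.Proper ∧ cost T A wT wA I = c}

/-- `K ⊨ₚᵒᵖᵗ q`: some interpretation of optimal cost satisfies `q`. -/
noncomputable def satPopt (T : Finset Axiom) (A : Finset Assertion)
    (wT : Axiom → ℕ∞) (wA : Assertion → ℕ∞) (q : BCQ) : Prop :=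
  ∃ (U : Type) (I : Interp U), I.Proper ∧ cost T A wT wA I = optCost T A wT wA ∧ satQ I q

/-- `K ⊨꜀ᵒᵖᵗ q`: every interpretation of optimal cost satisfies `q`. -/
noncomputable def satCopt (T : Finset Axiom) (A : Finset Assertion)
    (wT : Axiom → ℕ∞) (wA : Assertion → ℕ∞) (q : BCQ) : Prop :=
  ∀ (U : Type) (I : Interp U), I.Proper → cost T A wT wA I = optCost T A wT wA → satQ I q

/-! ### Occurrences of symbols -/

def Role.base : Role → RName
  | Role.name r => r
  | Role.inv r => r

def Concept.cnames : Concept → Finset CName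
  | Concept.atom A => {A}
  | Concept.neg C => C.cnames
  | Concept.conj C D => C.cnames ∪ D.cnames
  | Concept.ex _ C => C.cnames
  | _ => ∅

def Concept.rnames : Concept → Finset RName
  | Concept.neg C => C.rnames
  | Concept.conj C D => C.rnames ∪ D.rnames
  | Concept.ex r C => insert r.base C.rnames
  | _ => ∅

def Concept.indNames : Concept → Finset IndName
  | Concept.nom a => {a}
  | Concept.neg C => C.indNames
  | Concept.conj C D => C.indNames ∪ D.indNames
  | Concept.ex _ C => C.indNames
  | _ => ∅

def Axiom.cnames : Axiom → Finset CName
  | Axiom.ci C D => C.cnames ∪ D.cnames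
  | Axiom.ri _ _ => ∅

def Axiom.rnames : Axiom → Finset RName
  | Axiom.ci C D => C.rnames ∪ D.rnames
  | Axiom.ri r s => {r.base, s.base}

def Axiom.indNames : Axiom → Finset IndName
  | Axiom.ci C D => C.indNames ∪ D.indNames
  | Axiom.ri _ _ => ∅

def Assertion.cnames : Assertion → Finset CName
  | Assertion.ca A _ => {A}
  | Assertion.ra _ _ _ => ∅

def Assertion.rnames : Assertion → Finset RName
  | Assertion.ca _ _ => ∅
  | Assertion.ra r _ _ => {r}

def Assertion.indNames : Assertion → Finset IndName
  | Assertion.ca _ a => {a}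
  | Assertion.ra _ a b => {a, b}

/-- The individual names occurring in an ABox. -/
def aboxInds (A : Finset Assertion) : Finset IndName := A.biUnion Assertion.indNames

/-- The individual names occurring in a KB. -/
def kbInds (T : Finset Axiom) (A : Finset Assertion) : Finset IndName :=
  T.biUnion Axiom.indNames ∪ aboxInds A

def Term.indNames : Term → Finset IndName
  | Term.var _ => ∅
  | Term.ind a => {a}

def QAtom.indNames : QAtom → Finset IndName
  | QAtom.ca _ t => t.indNames
  | QAtom.ra _ t t' => t.indNames ∪ t'.indNames

def QAtom.cnames : QAtom → Finset CName
  | QAtom.ca A _ => {A}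
  | QAtom.ra _ _ _ => ∅

def qInds (q : BCQ) : Finset IndName := q.biUnion QAtom.indNames

def qCnames (q : BCQ) : Finset CName := q.biUnion QAtom.cnames

/-! ### Sizes -/

def Concept.size : Concept → ℕ
  | Concept.top => 1
  | Concept.bot => 1
  | Concept.atom _ => 1
  | Concept.nom _ => 1
  | Concept.neg C => C.size + 1
  | Concept.conj C D => C.size + D.size + 1
  | Concept.ex _ C => C.size + 2

def Axiom.size : Axiom → ℕ
  | Axiom.ci C D => C.size + D.size + 1
  | Axiom.ri _ _ => 3

def Assertion.size : Assertion → ℕ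
  | Assertion.ca _ _ => 2
  | Assertion.ra _ _ _ => 3

def tboxSize (T : Finset Axiom) : ℕ := ∑ τ ∈ T, τ.size

def aboxSize (A : Finset Assertion) : ℕ := ∑ α ∈ A, α.size

/-! ### DL-Lite fragments -/

/-- Basic concepts: concept names and unqualified existential restrictions `∃r` (with a
possibly inverse role `r`), the latter rendered as `∃r.⊤`. -/
inductive IsBasic : Concept → Prop
  | atom (A : CName) : IsBasic (Concept.atom A)
  | ex (r : Role) : IsBasic (Concept.ex r Concept.top)

/-- A `DL-Lite_core` axiom: `B ⊑ C` or `B ⊓ C ⊑ ⊥` with `B, C` basic concepts. -/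
def IsCoreAxiom (τ : Axiom) : Prop :=
  (∃ B C, τ = Axiom.ci B C ∧ IsBasic B ∧ IsBasic C) ∨
  (∃ B C, τ = Axiom.ci (Concept.conj B C) Concept.bot ∧ IsBasic B ∧ IsBasic C)

def IsDLLiteCore (T : Finset Axiom) : Prop := ∀ τ ∈ T, IsCoreAxiom τ

/-- Concepts built from basic concepts using `¬`, `⊓` (and hence also `⊔`). -/
inductive IsBoolConcept : Concept → Prop
  | basic {C} : IsBasic C → IsBoolConcept C
  | neg {C} : IsBoolConcept C → IsBoolConcept (Concept.neg C)
  | conj {C D} : IsBoolConcept C → IsBoolConcept D → IsBoolConcept (Concept.conj C D)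

/-- A `DL-Lite_bool^H` axiom: a concept inclusion between Boolean combinations of basic
concepts, or a role inclusion. -/
def IsBoolHAxiom (τ : Axiom) : Prop :=
  (∃ C D, τ = Axiom.ci C D ∧ IsBoolConcept C ∧ IsBoolConcept D) ∨ (∃ r s, τ = Axiom.ri r s)

def IsDLLiteBoolH (T : Finset Axiom) : Prop := ∀ τ ∈ T, IsBoolHAxiom τ

/-! Encoding of a 3-DNF formula `φ = ⋁_{i<ℓ} ⋀_{j<3} l_{i,j}` over variables
`v_0,…,v_{n-1}`: `φ i j = (b, v)` where `b = true` iff the `j`-th literal of the `i`-th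
conjunctive clause is the positive literal `v` (and `b = false` iff it is `¬v`). -/

/-- concept names -/
def cFalse : CName := 0
def cBool : CName := 1
def cTrue : CName := 2
def cVar : CName := 3

/-- role names -/
def rClause : RName := 0
def rVal : RName := 1
def rPos (j : Fin 3) : RName := 2 + (j : ℕ)
def rNeg (j : Fin 3) : RName := 5 + (j : ℕ)

/-- individual names -/
def aN : IndName := 0
def vN (n : ℕ) (k : Fin n) : IndName := 1 + (k : ℕ)
def cN (n ℓ : ℕ) (i : Fin ℓ) : IndName := 1 + n + (i : ℕ)

/-- The ABox `A_φ`. -/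
def dnfAbox (ℓ n : ℕ) (φ : Fin ℓ → Fin 3 → Bool × Fin n) : Finset Assertion :=
  {Assertion.ca cFalse aN, Assertion.ca cBool aN} ∪
  (Finset.univ.image fun k : Fin n => Assertion.ca cVar (vN n k)) ∪
  (Finset.univ.image fun i : Fin ℓ => Assertion.ra rClause aN (cN n ℓ i)) ∪
  (Finset.univ.image fun p : Fin ℓ × Fin 3 =>
    if (φ p.1 p.2).1 then Assertion.ra (rPos p.2) (cN n ℓ p.1) (vN n (φ p.1 p.2).2)
    else Assertion.ra (rNeg p.2) (cN n ℓ p.1) (vN n (φ p.1 p.2).2))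

/-- `X_j ∈ {∃pos_j.True, ∃neg_j.False}` according to the choice `f j`. -/
def comboDNF (f : Fin 3 → Bool) (j : Fin 3) : Concept :=
  if f j then Concept.ex (Role.name (rPos j)) (Concept.atom cTrue)
  else Concept.ex (Role.name (rNeg j)) (Concept.atom cFalse)

/-- The `EL` TBox `T`. -/
def dnfTbox : Finset Axiom :=
  {Axiom.ci (Concept.atom cBool) (Concept.atom cTrue),
   Axiom.ci (Concept.atom cVar) (Concept.ex (Role.name rVal) (Concept.atom cBool)),
   Axiom.ci (Concept.ex (Role.name rVal) (Concept.atom cTrue)) (Concept.atom cTrue),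
   Axiom.ci (Concept.ex (Role.name rVal) (Concept.atom cFalse)) (Concept.atom cFalse),
   Axiom.ci (Concept.ex (Role.name rClause) (Concept.atom cTrue)) (Concept.atom cTrue)} ∪
  (Finset.univ.image fun f : Fin 3 → Bool =>
    Axiom.ci (Concept.conj (Concept.conj (comboDNF f 0) (comboDNF f 1)) (comboDNF f 2))
      (Concept.atom cTrue))


/-!
If `a ∉ True`, then `a ∈ Bool \ True` is a violation of `Bool ⊑ True`, and a cost of at most `1`
leaves room for no other one. Each variable `v_k` has a `val`-successor in `Bool`; reading off
whether it is `True` gives a valuation `ν`, and `v_k` is `True` or `False` accordingly, since a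
`Bool` successor that is not `True` must be `a`, which is `False`. A clause satisfied by `ν`
makes `c_i` `True` through the axiom for its choice of literals, and then `∃clause.True ⊑ True`
makes `a` `True` after all.

Conversely a falsifying `ν` gives a countermodel: `v_k` points via `val` to a fresh element of
`Bool ⊓ True` if `ν k` holds and to `a` otherwise, so `a` is the only violation of
`Bool ⊑ True`, and no clause, hence not `a`, becomes `True`.
-/

section Cost

variable {U : Type} {T : Finset Axiom} {A : Finset Assertion} {wT : Axiom → ℕ∞}
  {wA : Assertion → ℕ∞} {I : Interp U}

lemma Axiom.vioCount_ci_eq_zero_iff {C D : Concept} :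
    (Axiom.ci C D).vioCount I = 0 ↔ C.interp I ⊆ D.interp I := by
  rw [Axiom.vioCount, Set.encard_eq_zero, vioCI, Set.sdiff_eq_empty]

lemma mul_vioCount_le_cost {τ : Axiom} (hτ : τ ∈ T) :
    wT τ * τ.vioCount I ≤ cost T A wT wA I :=
  (Finset.single_le_sum (f := fun τ => wT τ * τ.vioCount I) (fun _ _ => zero_le) hτ).trans
    le_self_add

lemma vioCount_eq_zero_of_cost_ne_top {τ : Axiom} (hτ : τ ∈ T) (hw : wT τ = ⊤)
    (hc : cost T A wT wA I ≠ ⊤) : τ.vioCount I = 0 := by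
  by_contra h
  have := mul_vioCount_le_cost (A := A) (wT := wT) (wA := wA) (I := I) hτ
  rw [hw, ENat.top_mul h, top_le_iff] at this
  exact hc this

open Classical in
lemma Assertion.sat_of_cost_ne_top {α : Assertion} (hα : α ∈ A) (hw : wA α = ⊤)
    (hc : cost T A wT wA I ≠ ⊤) : α.sat I := by
  by_contra h
  have : (if α.sat I then 0 else wA α) ≤ cost T A wT wA I :=
    (Finset.single_le_sum (f := fun α => if α.sat I then 0 else wA α)
      (fun _ _ => zero_le) hα).trans le_add_self
  rw [if_neg h, hw, top_le_iff] at this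
  exact hc this

open Classical in
lemma cost_eq_of_vioCount_eq_zero {τ₀ : Axiom} (h₀ : τ₀ ∈ T)
    (hT : ∀ τ ∈ T, τ ≠ τ₀ → τ.vioCount I = 0) (hA : ∀ α ∈ A, α.sat I) :
    cost T A wT wA I = wT τ₀ * τ₀.vioCount I := by
  rw [cost, Finset.sum_eq_single_of_mem τ₀ h₀ fun τ hτ hne => by rw [hT τ hτ hne, mul_zero],
    Finset.sum_eq_zero fun α hα => if_pos (hA α hα), add_zero]

end Cost

section Encoding

def truthName : Bool → CName
  | true => cTrue
  | false => cFalse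

def litRole : Bool → Fin 3 → RName
  | true, j => rPos j
  | false, j => rNeg j

lemma truthName_injective : Function.Injective truthName := by decide

lemma comboDNF_eq (f : Fin 3 → Bool) (j : Fin 3) :
    comboDNF f j = Concept.ex (Role.name (litRole (f j) j)) (Concept.atom (truthName (f j))) := by
  unfold comboDNF
  cases f j <;> rfl

abbrev axBoolTrue : Axiom := Axiom.ci (Concept.atom cBool) (Concept.atom cTrue)

abbrev axVar : Axiom :=
  Axiom.ci (Concept.atom cVar) (Concept.ex (Role.name rVal) (Concept.atom cBool))

abbrev axVal (b : Bool) : Axiom :=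
  Axiom.ci (Concept.ex (Role.name rVal) (Concept.atom (truthName b))) (Concept.atom (truthName b))

abbrev axClause : Axiom :=
  Axiom.ci (Concept.ex (Role.name rClause) (Concept.atom cTrue)) (Concept.atom cTrue)

abbrev axCombo (f : Fin 3 → Bool) : Axiom :=
  Axiom.ci (Concept.conj (Concept.conj (comboDNF f 0) (comboDNF f 1)) (comboDNF f 2))
    (Concept.atom cTrue)

lemma axBoolTrue_mem_dnfTbox : axBoolTrue ∈ dnfTbox := by
  simp [dnfTbox]

lemma forall_mem_dnfTbox_of_ne_axBoolTrue {P : Axiom → Prop} :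
    (∀ τ ∈ dnfTbox, τ ≠ axBoolTrue → P τ) ↔
      P axVar ∧ (∀ b, P (axVal b)) ∧ P axClause ∧ ∀ f, P (axCombo f) := by
  simp only [dnfTbox, cBool, cVar, Finset.insert_union, Finset.singleton_union,
    Finset.mem_insert, Finset.mem_image, Finset.mem_univ, true_and, ne_eq, forall_eq_or_imp,
    Axiom.ci.injEq, and_self, not_true_eq_false, IsEmpty.forall_iff, Concept.atom.injEq,
    OfNat.ofNat_ne_one, reduceCtorEq, not_false_eq_true, forall_const, and_true, false_and,
    forall_exists_index, forall_apply_eq_imp_iff, Bool.forall_bool]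
  exact ⟨fun ⟨hV, hT, hF, hC, hX⟩ => ⟨hV, ⟨hF, hT⟩, hC, hX⟩,
    fun ⟨hV, ⟨hF, hT⟩, hC, hX⟩ => ⟨hV, hT, hF, hC, hX⟩⟩

variable {ℓ n : ℕ} {φ : Fin ℓ → Fin 3 → Bool × Fin n}

lemma forall_mem_dnfAbox {P : Assertion → Prop} :
    (∀ α ∈ dnfAbox ℓ n φ, P α) ↔ P (Assertion.ca cFalse aN) ∧ P (Assertion.ca cBool aN) ∧
      (∀ k, P (Assertion.ca cVar (vN n k))) ∧ (∀ i, P (Assertion.ra rClause aN (cN n ℓ i))) ∧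
      ∀ i j, P (Assertion.ra (litRole (φ i j).1 j) (cN n ℓ i) (vN n (φ i j).2)) := by
  have hlit : ∀ i j, (if (φ i j).1 then Assertion.ra (rPos j) (cN n ℓ i) (vN n (φ i j).2)
      else Assertion.ra (rNeg j) (cN n ℓ i) (vN n (φ i j).2)) =
      Assertion.ra (litRole (φ i j).1 j) (cN n ℓ i) (vN n (φ i j).2) := fun i j => by
    cases (φ i j).1 <;> rfl
  simp only [dnfAbox, Finset.forall_mem_union, Finset.forall_mem_insert,
    Finset.mem_singleton, forall_eq, Finset.forall_mem_image, Finset.mem_univ, forall_const,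
    Prod.forall, hlit, and_assoc]

end Encoding

section Tautology

variable {ℓ n : ℕ} {φ : Fin ℓ → Fin 3 → Bool × Fin n} {U : Type} {I : Interp U}

lemma exists_valuation_of_not_mem_cTrue
    (hT : ∀ τ ∈ dnfTbox, τ ≠ axBoolTrue → τ.vioCount I = 0)
    (hBool : (vioCI I (Concept.atom cBool) (Concept.atom cTrue)).Subsingleton)
    (hA : ∀ α ∈ dnfAbox ℓ n φ, α.sat I) (ha : I.indI aN ∉ I.cI cTrue) :
    ∃ ν : Fin n → Bool, ∀ k, I.indI (vN n k) ∈ I.cI (truthName (ν k)) := by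
  obtain ⟨hVar, hVal, -, -⟩ := forall_mem_dnfTbox_of_ne_axBoolTrue.mp hT
  obtain ⟨haFalse, haBool, hVarAssert, -, -⟩ := forall_mem_dnfAbox.mp hA
  have hval (k : Fin n) : ∃ e, (I.indI (vN n k), e) ∈ I.rI rVal ∧ e ∈ I.cI cBool :=
    Axiom.vioCount_ci_eq_zero_iff.mp hVar (hVarAssert k)
  choose e he using hval
  classical
  refine ⟨fun k => decide (e k ∈ I.cI cTrue), fun k => ?_⟩
  have he_truth : e k ∈ I.cI (truthName (decide (e k ∈ I.cI cTrue))) := by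
    by_cases h : e k ∈ I.cI cTrue
    · rw [decide_eq_true h]
      exact h
    · have : e k = I.indI aN := hBool ⟨(he k).2, h⟩ ⟨haBool, ha⟩
      rw [decide_eq_false h, this]
      exact haFalse
  exact Axiom.vioCount_ci_eq_zero_iff.mp (hVal _) ⟨e k, (he k).1, he_truth⟩

lemma cN_mem_cTrue_of_satisfies
    (hT : ∀ τ ∈ dnfTbox, τ ≠ axBoolTrue → τ.vioCount I = 0)
    (hA : ∀ α ∈ dnfAbox ℓ n φ, α.sat I) {ν : Fin n → Bool}
    (hν : ∀ k, I.indI (vN n k) ∈ I.cI (truthName (ν k))) {i : Fin ℓ}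
    (hi : ∀ j, ν (φ i j).2 = (φ i j).1) : I.indI (cN n ℓ i) ∈ I.cI cTrue := by
  obtain ⟨-, -, -, hCombo⟩ := forall_mem_dnfTbox_of_ne_axBoolTrue.mp hT
  obtain ⟨-, -, -, -, hLit⟩ := forall_mem_dnfAbox.mp hA
  have hlit (j : Fin 3) :
      I.indI (cN n ℓ i) ∈ (comboDNF (fun j => (φ i j).1) j).interp I := by
    rw [comboDNF_eq]
    exact ⟨_, hLit i j, hi j ▸ hν (φ i j).2⟩
  exact Axiom.vioCount_ci_eq_zero_iff.mp (hCombo _) ⟨⟨hlit 0, hlit 1⟩, hlit 2⟩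

lemma aN_mem_cTrue_of_tautology
    (hT : ∀ τ ∈ dnfTbox, τ ≠ axBoolTrue → τ.vioCount I = 0)
    (hBool : (vioCI I (Concept.atom cBool) (Concept.atom cTrue)).Subsingleton)
    (hA : ∀ α ∈ dnfAbox ℓ n φ, α.sat I)
    (htaut : ∀ ν : Fin n → Bool, ∃ i : Fin ℓ, ∀ j : Fin 3, ν (φ i j).2 = (φ i j).1) :
    I.indI aN ∈ I.cI cTrue := by
  by_contra ha
  obtain ⟨ν, hν⟩ := exists_valuation_of_not_mem_cTrue hT hBool hA ha
  obtain ⟨i, hi⟩ := htaut ν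
  obtain ⟨-, -, hClause, -⟩ := forall_mem_dnfTbox_of_ne_axBoolTrue.mp hT
  obtain ⟨-, -, -, hClauseAssert, -⟩ := forall_mem_dnfAbox.mp hA
  exact ha (Axiom.vioCount_ci_eq_zero_iff.mp hClause
    ⟨_, hClauseAssert i, cN_mem_cTrue_of_satisfies hT hA hν hi⟩)

end Tautology

section Countermodel

variable {ℓ n : ℕ}

-- `1 + n + ℓ` is the first individual name not occurring in `A_φ`.
def truthWitness (n ℓ : ℕ) : Bool → IndName
  | true => 1 + n + ℓ
  | false => aN

lemma truthWitness_injective : Function.Injective (truthWitness n ℓ) := by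
  have hne : truthWitness n ℓ true ≠ truthWitness n ℓ false := by
    show 1 + n + ℓ ≠ 0
    omega
  intro b b' h
  cases b <;> cases b'
  exacts [rfl, absurd h.symm hne, absurd h hne, rfl]

lemma vN_injective : Function.Injective (vN n) := fun _ _ h =>
  Fin.ext (Nat.add_left_cancel h)

lemma cN_injective : Function.Injective (cN n ℓ) := fun _ _ h =>
  Fin.ext (Nat.add_left_cancel h)

lemma vN_ne_truthWitness (k : Fin n) (b : Bool) : vN n k ≠ truthWitness n ℓ b := by
  have := k.isLt
  cases b
  · show 1 + (k : ℕ) ≠ 0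
    omega
  · show 1 + (k : ℕ) ≠ 1 + n + ℓ
    omega

lemma cN_ne_truthWitness (i : Fin ℓ) (b : Bool) : cN n ℓ i ≠ truthWitness n ℓ b := by
  have := i.isLt
  cases b
  · show 1 + n + (i : ℕ) ≠ 0
    omega
  · show 1 + n + (i : ℕ) ≠ 1 + n + ℓ
    omega

lemma vN_ne_cN (k : Fin n) (i : Fin ℓ) : vN n k ≠ cN n ℓ i := by
  have := k.isLt
  show 1 + (k : ℕ) ≠ 1 + n + i
  omega

variable (φ : Fin ℓ → Fin 3 → Bool × Fin n) (ν : Fin n → Bool)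

def counterModel : Interp ℕ where
  dom := Set.univ
  indI := id
  cI A := {x | (A = cBool ∧ ∃ b, x = truthWitness n ℓ b) ∨ (A = cVar ∧ ∃ k, x = vN n k) ∨
    ∃ b, A = truthName b ∧ (x = truthWitness n ℓ b ∨ ∃ k, ν k = b ∧ x = vN n k)}
  rI r := {p | (r = rClause ∧ ∃ i, p = (aN, cN n ℓ i)) ∨
    (r = rVal ∧ ∃ k, p = (vN n k, truthWitness n ℓ (ν k))) ∨
    ∃ i j, r = litRole (φ i j).1 j ∧ p = (cN n ℓ i, vN n (φ i j).2)}
  cI_sub _ := Set.subset_univ _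
  rI_sub _ _ _ := ⟨trivial, trivial⟩

variable {φ ν}

lemma counterModel_cBool {x : ℕ} :
    x ∈ (counterModel φ ν).cI cBool ↔ ∃ b, x = truthWitness n ℓ b := by
  have hVar : cBool ≠ cVar := by decide
  have hTruth : ∀ b, cBool ≠ truthName b := by decide
  simp [counterModel, hVar, hTruth]

lemma counterModel_cVar {x : ℕ} :
    x ∈ (counterModel φ ν).cI cVar ↔ ∃ k, x = vN n k := by
  have hBool : cVar ≠ cBool := by decide
  have hTruth : ∀ b, cVar ≠ truthName b := by decide
  simp [counterModel, hBool, hTruth]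

lemma counterModel_truthName {b : Bool} {x : ℕ} :
    x ∈ (counterModel φ ν).cI (truthName b) ↔
      x = truthWitness n ℓ b ∨ ∃ k, ν k = b ∧ x = vN n k := by
  have hBool : ∀ b, truthName b ≠ cBool := by decide
  have hVar : ∀ b, truthName b ≠ cVar := by decide
  cases b <;> simp [counterModel, hBool, hVar, truthName_injective.eq_iff]

lemma counterModel_rClause {p : ℕ × ℕ} :
    p ∈ (counterModel φ ν).rI rClause ↔ ∃ i, p = (aN, cN n ℓ i) := by
  have hVal : rClause ≠ rVal := by decide
  have hLit : ∀ b j, rClause ≠ litRole b j := by decide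
  simp [counterModel, hVal, hLit]

lemma counterModel_rVal {p : ℕ × ℕ} :
    p ∈ (counterModel φ ν).rI rVal ↔ ∃ k, p = (vN n k, truthWitness n ℓ (ν k)) := by
  have hClause : rVal ≠ rClause := by decide
  have hLit : ∀ b j, rVal ≠ litRole b j := by decide
  simp [counterModel, hClause, hLit]

lemma counterModel_litRole {b : Bool} {j : Fin 3} {p : ℕ × ℕ} :
    p ∈ (counterModel φ ν).rI (litRole b j) ↔
      ∃ i, (φ i j).1 = b ∧ p = (cN n ℓ i, vN n (φ i j).2) := by
  have hClause : ∀ b j, litRole b j ≠ rClause := by decide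
  have hVal : ∀ b j, litRole b j ≠ rVal := by decide
  have hinj : ∀ b j b' j', litRole b j = litRole b' j' ↔ b = b' ∧ j = j' := by decide
  simp [counterModel, hClause, hVal, hinj, eq_comm (a := b)]

lemma counterModel_sat_dnfAbox : ∀ α ∈ dnfAbox ℓ n φ, α.sat (counterModel φ ν) :=
  forall_mem_dnfAbox.mpr
    ⟨counterModel_truthName (b := false) |>.mpr (Or.inl rfl), counterModel_cBool.mpr ⟨false, rfl⟩,
      fun k => counterModel_cVar.mpr ⟨k, rfl⟩, fun i => counterModel_rClause.mpr ⟨i, rfl⟩,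
      fun i _ => counterModel_litRole.mpr ⟨i, rfl, rfl⟩⟩

lemma eq_cN_of_mem_comboDNF {f : Fin 3 → Bool} {j : Fin 3} {x : ℕ}
    (hx : x ∈ (comboDNF f j).interp (counterModel φ ν)) :
    ∃ i, x = cN n ℓ i ∧ ν (φ i j).2 = (φ i j).1 := by
  rw [comboDNF_eq] at hx
  obtain ⟨y, hxy, hy⟩ := hx
  obtain ⟨i, hi, hxy⟩ := counterModel_litRole.mp hxy
  obtain ⟨rfl, rfl⟩ := Prod.mk.inj hxy
  refine ⟨i, rfl, ?_⟩
  obtain hy | ⟨k, hk, hy⟩ := counterModel_truthName.mp hy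
  · exact absurd hy (vN_ne_truthWitness _ _)
  · rw [vN_injective hy, hk, hi]

lemma counterModel_vioCount_eq_zero (hν : ∀ i, ∃ j, ν (φ i j).2 ≠ (φ i j).1) :
    ∀ τ ∈ dnfTbox, τ ≠ axBoolTrue → τ.vioCount (counterModel φ ν) = 0 := by
  simp only [forall_mem_dnfTbox_of_ne_axBoolTrue, Axiom.vioCount_ci_eq_zero_iff]
  refine ⟨?var, fun b => ?val, ?clause, fun f => ?combo⟩
  case var =>
    rintro x hx
    obtain ⟨k, rfl⟩ := counterModel_cVar.mp hx
    exact ⟨_, counterModel_rVal.mpr ⟨k, rfl⟩, counterModel_cBool.mpr ⟨ν k, rfl⟩⟩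
  case val =>
    rintro x ⟨y, hxy, hy⟩
    obtain ⟨k, hxy⟩ := counterModel_rVal.mp hxy
    obtain ⟨rfl, rfl⟩ := Prod.mk.inj hxy
    obtain hy | ⟨k', -, hy⟩ := counterModel_truthName.mp hy
    · exact counterModel_truthName.mpr (Or.inr ⟨k, truthWitness_injective hy, rfl⟩)
    · exact absurd hy.symm (vN_ne_truthWitness _ _)
  case clause =>
    rintro x ⟨y, hxy, hy⟩
    obtain ⟨i, hxy⟩ := counterModel_rClause.mp hxy
    obtain ⟨-, rfl⟩ := Prod.mk.inj hxy
    obtain hy | ⟨k, -, hy⟩ := counterModel_truthName (b := true).mp hy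
    · exact absurd hy (cN_ne_truthWitness _ _)
    · exact absurd hy.symm (vN_ne_cN _ _)
  case combo =>
    rintro x ⟨⟨h₀, h₁⟩, h₂⟩
    obtain ⟨i, rfl, hi₀⟩ := eq_cN_of_mem_comboDNF h₀
    obtain ⟨i₁, hi₁x, hi₁⟩ := eq_cN_of_mem_comboDNF h₁
    obtain ⟨i₂, hi₂x, hi₂⟩ := eq_cN_of_mem_comboDNF h₂
    obtain rfl := cN_injective hi₁x
    obtain rfl := cN_injective hi₂x
    obtain ⟨j, hj⟩ := hν i
    fin_cases j
    exacts [absurd hi₀ hj, absurd hi₁ hj, absurd hi₂ hj]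

lemma counterModel_vioCI_boolTrue_subset :
    vioCI (counterModel φ ν) (Concept.atom cBool) (Concept.atom cTrue) ⊆ {aN} := by
  rintro x ⟨hx, hxT⟩
  obtain ⟨b, rfl⟩ := counterModel_cBool.mp hx
  cases b
  · rfl
  · exact absurd (counterModel_truthName (b := true) |>.mpr (Or.inl rfl)) hxT

lemma aN_not_mem_counterModel_cTrue : aN ∉ (counterModel φ ν).cI cTrue := by
  intro h
  obtain h | ⟨k, -, h⟩ := counterModel_truthName (b := true).mp h
  · exact Bool.false_ne_true (truthWitness_injective h)
  · exact vN_ne_truthWitness (ℓ := ℓ) k false h.symm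

lemma counterModel_cost_le_one {wT : Axiom → ℕ∞} {wA : Assertion → ℕ∞} (hw : wT axBoolTrue = 1)
    (hν : ∀ i, ∃ j, ν (φ i j).2 ≠ (φ i j).1) :
    cost dnfTbox (dnfAbox ℓ n φ) wT wA (counterModel φ ν) ≤ 1 := by
  rw [cost_eq_of_vioCount_eq_zero axBoolTrue_mem_dnfTbox (counterModel_vioCount_eq_zero hν)
    counterModel_sat_dnfAbox, hw, one_mul]
  exact (Set.encard_le_encard counterModel_vioCI_boolTrue_subset).trans
    (Set.encard_singleton _).le

end Countermodel

/-- A 3-DNF formula `φ` is a tautology iff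
`(T, A_φ)_ω ⊨꜀¹ True(a)`, where `ω` assigns `∞` to every axiom and assertion except
`Bool ⊑ True`, which gets weight `1`. -/
theorem statement12 (ℓ n : ℕ) (φ : Fin ℓ → Fin 3 → Bool × Fin n) :
    (∀ ν : Fin n → Bool, ∃ i : Fin ℓ, ∀ j : Fin 3, ν (φ i j).2 = (φ i j).1) ↔
      satC dnfTbox (dnfAbox ℓ n φ)
        (fun τ => if τ = Axiom.ci (Concept.atom cBool) (Concept.atom cTrue) then 1 else ⊤)
        (fun _ => ⊤) 1 {QAtom.ca cTrue (Term.ind aN)} := by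
  constructor
  · intro htaut U I hI hcost
    have hfin := (hcost.trans_lt (ENat.natCast_lt_top 1)).ne
    have hBool : (vioCI I (Concept.atom cBool) (Concept.atom cTrue)).Subsingleton :=
      Set.encard_le_one_iff_subsingleton.mp <| by
        simpa [Axiom.vioCount] using (mul_vioCount_le_cost axBoolTrue_mem_dnfTbox).trans hcost
    refine ⟨fun _ => I.indI aN, fun _ => hI aN, ?_⟩
    simp only [Finset.mem_singleton, forall_eq]
    exact aN_mem_cTrue_of_tautology
      (fun τ hτ hne => vioCount_eq_zero_of_cost_ne_top hτ (if_neg hne) hfin) hBool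
      (fun α hα => Assertion.sat_of_cost_ne_top hα rfl hfin) htaut
  · intro hC ν
    by_contra! hν
    obtain ⟨_, -, hq⟩ := hC ℕ (counterModel φ ν) (fun _ => Set.mem_univ _)
      (counterModel_cost_le_one (if_pos rfl) hν)
    exact aN_not_mem_counterModel_cTrue (hq _ (Finset.mem_singleton_self _))

end DL
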